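/- With the same hypotheses, and $X^{(n)}$ defined by $X^{(0)} \equiv 1$, $X^{(n)}(x) = n\int_0^x X^{(n-1)}(\xi) g_0^{-2}(\xi) d\xi$ for odd $n$ and $X^{(n)}(x) = n\int_0^x X^{(n-1)}(\xi) g_0^2(\xi) d\xi$ for even $n$, the function $u_2(x) = g_0(x) \sum_{\text{odd } n \geq 1} \frac{\omega^n}{n!} X^{(n)}(x)$ is a solution of $-u_2'' + q u_2 + \omega^2 u_2 = 0$ on $I$. -/

import Mathlib

/-!
Write `aₙ = ωⁿ/n! · X⁽ⁿ⁾`. Since `X⁽ⁿ⁺¹⁾' = (n+1) X⁽ⁿ⁾ w`, with `w = g₀⁻²` or `g₀²` according to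
the parity of `n+1`, we get `aₙ₊₁' = ω w aₙ`. So the odd part `O = ∑ a₂ₖ₊₁` and the even part
`E = ∑ a₂ₖ` satisfy `O' = ω g₀⁻² E` and `E' = ω g₀² O`. Termwise differentiation is legitimate on
any interval around `0` on which the weights are bounded by `C`: there `‖X⁽ⁿ⁾(x)‖ ≤ (C|x|)ⁿ`, so the
series are dominated by exponential series. Finally, for `u₂ = g₀ O` we get
`u₂' = g₀' O + ω E / g₀` and, using `g₀'' = q g₀`, `u₂'' = (q + ω²) u₂`.
-/

open scoped Nat

/-- The SPPS recursive integrals: `spps wodd weven 0 ≡ 1` and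
`spps wodd weven n x = n ∫₀ˣ spps wodd weven (n-1) · w`, where the weight `w`
is `wodd` when `n` is odd and `weven` when `n` is even. -/
noncomputable def spps (wodd weven : ℝ → ℂ) : ℕ → ℝ → ℂ
  | 0 => fun _ => 1
  | n + 1 => fun x => (n + 1 : ℂ) *
      ∫ t in (0:ℝ)..x,
        spps wodd weven n t * (if (n + 1) % 2 = 1 then wodd t else weven t)

open Set Filter Topology

noncomputable def sppsWeight (w1 w2 : ℝ → ℂ) (n : ℕ) (t : ℝ) : ℂ :=
  if n % 2 = 1 then w1 t else w2 t

noncomputable def sppsTerm (w1 w2 : ℝ → ℂ) (ω : ℂ) (n : ℕ) (y : ℝ) : ℂ :=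
  ω ^ n / (n ! : ℂ) * spps w1 w2 n y

noncomputable def sppsTermDeriv (w1 w2 : ℝ → ℂ) (ω : ℂ) : ℕ → ℝ → ℂ
  | 0, _ => 0
  | n + 1, y => ω * (sppsWeight w1 w2 (n + 1) y * sppsTerm w1 w2 ω n y)

lemma spps_succ (w1 w2 : ℝ → ℂ) (n : ℕ) (x : ℝ) :
    spps w1 w2 (n + 1) x =
      (n + 1 : ℂ) * ∫ t in (0:ℝ)..x, spps w1 w2 n t * sppsWeight w1 w2 (n + 1) t :=
  rfl

lemma abs_integral_abs_pow (n : ℕ) (x : ℝ) :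
    |∫ t in (0:ℝ)..x, |t| ^ n| = |x| ^ (n + 1) / (n + 1) := by
  wlog hx : 0 ≤ x generalizing x
  · have h := intervalIntegral.integral_comp_neg (a := 0) (b := x) fun t => |t| ^ n
    simp only [abs_neg, neg_zero] at h
    rw [h, intervalIntegral.integral_symm, abs_neg, this (-x) (by linarith), abs_neg]
  rw [intervalIntegral.integral_congr (g := fun t => t ^ n) fun t ht => by
      rw [uIcc_of_le hx] at ht; simp [abs_of_nonneg ht.1], integral_pow, abs_of_nonneg hx]
  rw [zero_pow n.succ_ne_zero, sub_zero, abs_of_nonneg (by positivity)]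

section

variable {w1 w2 : ℝ → ℂ} {s : Set ℝ}

lemma ContinuousOn.sppsWeight (hw1 : ContinuousOn w1 s) (hw2 : ContinuousOn w2 s) (n : ℕ) :
    ContinuousOn (sppsWeight w1 w2 n) s := by
  show ContinuousOn (fun t => if n % 2 = 1 then w1 t else w2 t) s
  split_ifs <;> assumption

lemma norm_sppsWeight_le {C t : ℝ} (h1 : ‖w1 t‖ ≤ C) (h2 : ‖w2 t‖ ≤ C) (n : ℕ) :
    ‖sppsWeight w1 w2 n t‖ ≤ C := by
  unfold sppsWeight; split_ifs <;> assumption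

lemma hasDerivAt_spps_succ_of_continuousOn (hs : IsOpen s) (hs' : s.OrdConnected)
    (h0 : 0 ∈ s) (hw1 : ContinuousOn w1 s) (hw2 : ContinuousOn w2 s) {n : ℕ}
    (hn : ContinuousOn (spps w1 w2 n) s) {x : ℝ} (hx : x ∈ s) :
    HasDerivAt (spps w1 w2 (n + 1))
      ((n + 1 : ℂ) * (spps w1 w2 n x * sppsWeight w1 w2 (n + 1) x)) x := by
  have hf := hn.mul (hw1.sppsWeight hw2 (n + 1))
  exact (intervalIntegral.integral_hasDerivAt_right
    (hf.mono (hs'.uIcc_subset h0 hx)).intervalIntegrable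
    (hf.stronglyMeasurableAtFilter hs x hx) (hf.continuousAt (hs.mem_nhds hx))).const_mul _

lemma continuousOn_spps (hs : IsOpen s) (hs' : s.OrdConnected) (h0 : 0 ∈ s)
    (hw1 : ContinuousOn w1 s) (hw2 : ContinuousOn w2 s) (n : ℕ) :
    ContinuousOn (spps w1 w2 n) s := by
  induction n with
  | zero => exact continuousOn_const
  | succ n ih => exact fun x hx =>
      (hasDerivAt_spps_succ_of_continuousOn hs hs' h0 hw1 hw2 ih hx).continuousAt
        |>.continuousWithinAt

lemma hasDerivAt_spps_succ (hs : IsOpen s) (hs' : s.OrdConnected) (h0 : 0 ∈ s)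
    (hw1 : ContinuousOn w1 s) (hw2 : ContinuousOn w2 s) (n : ℕ) {x : ℝ} (hx : x ∈ s) :
    HasDerivAt (spps w1 w2 (n + 1))
      ((n + 1 : ℂ) * (spps w1 w2 n x * sppsWeight w1 w2 (n + 1) x)) x :=
  hasDerivAt_spps_succ_of_continuousOn hs hs' h0 hw1 hw2 (continuousOn_spps hs hs' h0 hw1 hw2 n) hx

lemma norm_spps_le (hs' : s.OrdConnected) (h0 : 0 ∈ s) {C : ℝ}
    (hC1 : ∀ t ∈ s, ‖w1 t‖ ≤ C) (hC2 : ∀ t ∈ s, ‖w2 t‖ ≤ C) (n : ℕ) {x : ℝ} (hx : x ∈ s) :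
    ‖spps w1 w2 n x‖ ≤ (C * |x|) ^ n := by
  have hC : 0 ≤ C := (norm_nonneg _).trans (hC1 0 h0)
  induction n generalizing x with
  | zero => simp [spps]
  | succ n ih =>
    have hbound : ∀ t ∈ uIoc (0:ℝ) x,
        ‖spps w1 w2 n t * sppsWeight w1 w2 (n + 1) t‖ ≤ C ^ (n + 1) * |t| ^ n := fun t ht => by
      have hts := hs'.uIcc_subset h0 hx (uIoc_subset_uIcc ht)
      rw [norm_mul, pow_succ, mul_right_comm, ← mul_pow]
      exact mul_le_mul (ih hts) (norm_sppsWeight_le (hC1 t hts) (hC2 t hts) _)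
        (norm_nonneg _) (by positivity)
    have hint := intervalIntegral.norm_integral_le_abs_of_norm_le
      ((MeasureTheory.ae_restrict_iff' measurableSet_uIoc).mpr (.of_forall hbound))
      ((continuous_const.mul (continuous_abs.pow n)).intervalIntegrable
        (μ := MeasureTheory.volume) 0 x)
    rw [intervalIntegral.integral_const_mul, abs_mul, abs_integral_abs_pow,
      abs_of_nonneg (by positivity)] at hint
    have hn : ‖(n + 1 : ℂ)‖ = n + 1 := by exact_mod_cast Complex.norm_natCast (n + 1)
    rw [spps_succ, norm_mul, hn]
    calc ((n : ℝ) + 1) * ‖∫ t in (0:ℝ)..x, spps w1 w2 n t * sppsWeight w1 w2 (n + 1) t‖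
        ≤ (n + 1) * (C ^ (n + 1) * (|x| ^ (n + 1) / (n + 1))) := by gcongr
      _ = (C * |x|) ^ (n + 1) := by field_simp; ring

lemma hasDerivAt_sppsTerm (hs : IsOpen s) (hs' : s.OrdConnected) (h0 : 0 ∈ s)
    (hw1 : ContinuousOn w1 s) (hw2 : ContinuousOn w2 s) (ω : ℂ) (n : ℕ) {y : ℝ} (hy : y ∈ s) :
    HasDerivAt (sppsTerm w1 w2 ω n) (sppsTermDeriv w1 w2 ω n y) y := by
  cases n with
  | zero => exact hasDerivAt_const y (ω ^ 0 / (0 ! : ℂ) * 1)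
  | succ n =>
    refine ((hasDerivAt_spps_succ hs hs' h0 hw1 hw2 n hy).const_mul
      (ω ^ (n + 1) / ((n + 1)! : ℂ))).congr_deriv ?_
    rw [sppsTermDeriv, sppsTerm, Nat.factorial_succ]
    push_cast
    field_simp
    ring

lemma norm_sppsTerm_le (hs' : s.OrdConnected) (h0 : 0 ∈ s) {C R : ℝ}
    (hC1 : ∀ t ∈ s, ‖w1 t‖ ≤ C) (hC2 : ∀ t ∈ s, ‖w2 t‖ ≤ C) (ω : ℂ) (n : ℕ) {y : ℝ}
    (hy : y ∈ s) (hR : |y| ≤ R) :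
    ‖sppsTerm w1 w2 ω n y‖ ≤ (‖ω‖ * (C * R)) ^ n / n ! := by
  have hC : 0 ≤ C := (norm_nonneg _).trans (hC1 0 h0)
  calc ‖sppsTerm w1 w2 ω n y‖ = ‖ω‖ ^ n / n ! * ‖spps w1 w2 n y‖ := by
        simp [sppsTerm]
    _ ≤ ‖ω‖ ^ n / n ! * (C * R) ^ n := by
        gcongr
        exact (norm_spps_le hs' h0 hC1 hC2 n hy).trans (by gcongr)
    _ = (‖ω‖ * (C * R)) ^ n / n ! := by ring

lemma norm_sppsTermDeriv_le (hs' : s.OrdConnected) (h0 : 0 ∈ s) {C R : ℝ}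
    (hC1 : ∀ t ∈ s, ‖w1 t‖ ≤ C) (hC2 : ∀ t ∈ s, ‖w2 t‖ ≤ C) (ω : ℂ) (n : ℕ) {y : ℝ}
    (hy : y ∈ s) (hR : |y| ≤ R) :
    ‖sppsTermDeriv w1 w2 ω n y‖ ≤ ‖ω‖ * C * ((‖ω‖ * (C * R)) ^ (n - 1) / (n - 1)!) := by
  have hC : 0 ≤ C := (norm_nonneg _).trans (hC1 0 h0)
  have hR0 : 0 ≤ R := (abs_nonneg y).trans hR
  cases n with
  | zero => rw [sppsTermDeriv, norm_zero]; positivity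
  | succ n =>
    rw [sppsTermDeriv, norm_mul, norm_mul, mul_assoc, Nat.add_sub_cancel]
    gcongr
    · exact norm_sppsWeight_le (hC1 y hy) (hC2 y hy) _
    · exact norm_sppsTerm_le hs' h0 hC1 hC2 ω n hy hR

lemma hasDerivAt_tsum_sppsTerm_comp {c d : ℝ} (h0 : (0:ℝ) ∈ Ioo c d)
    (hw1 : ContinuousOn w1 (Icc c d)) (hw2 : ContinuousOn w2 (Icc c d)) (ω : ℂ)
    {m : ℕ → ℕ} (hm : m.Injective) {y : ℝ} (hy : y ∈ Ioo c d) :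
    HasDerivAt (fun z => ∑' k, sppsTerm w1 w2 ω (m k) z)
      (∑' k, sppsTermDeriv w1 w2 ω (m k) y) y := by
  obtain ⟨C1, hC1⟩ := isCompact_Icc.exists_bound_of_continuousOn hw1
  obtain ⟨C2, hC2⟩ := isCompact_Icc.exists_bound_of_continuousOn hw2
  have hC1' : ∀ t ∈ Ioo c d, ‖w1 t‖ ≤ max C1 C2 :=
    fun t ht => (hC1 t (Ioo_subset_Icc_self ht)).trans (le_max_left _ _)
  have hC2' : ∀ t ∈ Ioo c d, ‖w2 t‖ ≤ max C1 C2 :=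
    fun t ht => (hC2 t (Ioo_subset_Icc_self ht)).trans (le_max_right _ _)
  have hR : ∀ t ∈ Ioo c d, |t| ≤ max (-c) d := fun t ht =>
    abs_le.mpr ⟨by linarith [ht.1, le_max_left (-c) d], ht.2.le.trans (le_max_right _ _)⟩
  set ρ := ‖ω‖ * (max C1 C2 * max (-c) d)
  have hexp : Summable fun n : ℕ => ρ ^ (n - 1) / (n - 1)! :=
    (summable_nat_add_iff 1).mp (by simpa using Real.summable_pow_div_factorial ρ)
  have hs' : (Ioo c d).OrdConnected := ordConnected_Ioo
  exact hasDerivAt_tsum_of_isPreconnected ((hexp.mul_left _).comp_injective hm) isOpen_Ioo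
    isPreconnected_Ioo
    (fun k z hz => hasDerivAt_sppsTerm isOpen_Ioo hs' h0
      (hw1.mono Ioo_subset_Icc_self) (hw2.mono Ioo_subset_Icc_self) ω (m k) hz)
    (fun k z hz => norm_sppsTermDeriv_le hs' h0 hC1' hC2' ω (m k) hz (hR z hz)) h0
    (.of_norm_bounded ((Real.summable_pow_div_factorial ρ).comp_injective hm)
      fun k => norm_sppsTerm_le hs' h0 hC1' hC2' ω (m k) h0 (hR 0 h0)) hy

lemma hasDerivAt_tsum_sppsTerm_odd {c d : ℝ} (h0 : (0:ℝ) ∈ Ioo c d)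
    (hw1 : ContinuousOn w1 (Icc c d)) (hw2 : ContinuousOn w2 (Icc c d)) (ω : ℂ)
    {y : ℝ} (hy : y ∈ Ioo c d) :
    HasDerivAt (fun z => ∑' k, sppsTerm w1 w2 ω (2 * k + 1) z)
      (ω * (w1 y * ∑' k, sppsTerm w1 w2 ω (2 * k) y)) y := by
  convert hasDerivAt_tsum_sppsTerm_comp h0 hw1 hw2 ω (m := fun k => 2 * k + 1)
    (fun k l h => by simp only at h; omega) hy using 1
  rw [← tsum_mul_left, ← tsum_mul_left]
  congr! 2 with k
  simp [sppsTermDeriv, sppsWeight]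

lemma hasDerivAt_tsum_sppsTerm_even {c d : ℝ} (h0 : (0:ℝ) ∈ Ioo c d)
    (hw1 : ContinuousOn w1 (Icc c d)) (hw2 : ContinuousOn w2 (Icc c d)) (ω : ℂ)
    {y : ℝ} (hy : y ∈ Ioo c d) :
    HasDerivAt (fun z => ∑' k, sppsTerm w1 w2 ω (2 * k) z)
      (ω * (w2 y * ∑' k, sppsTerm w1 w2 ω (2 * k + 1) y)) y := by
  convert hasDerivAt_tsum_sppsTerm_comp h0 hw1 hw2 ω (m := fun k => 2 * k)
    (fun k l h => by simp only at h; omega) hy using 1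
  rw [← tsum_pnat_eq_tsum_of_eq_zero (f := fun k => sppsTermDeriv w1 w2 ω (2 * k) y) rfl,
    tsum_pnat_eq_tsum_succ (f := fun k => sppsTermDeriv w1 w2 ω (2 * k) y),
    ← tsum_mul_left, ← tsum_mul_left]
  congr! 2 with k
  simp [sppsTermDeriv, sppsWeight, mul_add, Nat.add_mod]

end

lemma neg_deriv_deriv_mul_add_eq_zero {g g' O E : ℝ → ℂ} {q ω : ℂ} {x : ℝ}
    (hloc : ∀ᶠ y in 𝓝 x, HasDerivAt g (g' y) y ∧ g y ≠ 0 ∧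
      HasDerivAt O (ω * ((g y ^ 2)⁻¹ * E y)) y)
    (hg' : HasDerivAt g' (q * g x) x) (hE : HasDerivAt E (ω * (g x ^ 2 * O x)) x) :
    -deriv (deriv fun y => g y * O y) x + q * (g x * O x) + ω ^ 2 * (g x * O x) = 0 := by
  have hu : deriv (fun y => g y * O y) =ᶠ[𝓝 x] fun y => g' y * O y + ω * E y / g y := by
    filter_upwards [hloc] with y ⟨hg, hgy, hO⟩
    have hu : HasDerivAt (fun y => g y * O y) _ y := hg.mul hO
    rw [hu.deriv]
    field_simp
  obtain ⟨hg, hgx, hO⟩ := hloc.self_of_nhds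
  have hu' : HasDerivAt (fun y => g' y * O y + ω * E y / g y) _ x :=
    (hg'.mul hO).add ((hE.const_mul ω).div hg hgx)
  rw [hu.deriv_eq, hu'.deriv]
  field_simp
  ring

lemma exists_Icc_subset_Ioo_of_mem {a b x y : ℝ} (hx : x ∈ Ioo a b) (hy : y ∈ Ioo a b) :
    ∃ c d, x ∈ Ioo c d ∧ y ∈ Ioo c d ∧ Icc c d ⊆ Ioo a b := by
  have := min_le_left x y; have := min_le_right x y
  have := le_max_left x y; have := le_max_right x y
  have := lt_min hx.1 hy.1; have := max_lt hx.2 hy.2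
  refine ⟨(a + min x y) / 2, (b + max x y) / 2, ⟨?_, ?_⟩, ⟨?_, ?_⟩, fun t ⟨ht1, ht2⟩ => ⟨?_, ?_⟩⟩
  all_goals linarith

theorem spps_u2_solution_general (a b : ℝ) (ha : a < 0) (hb : 0 < b) (ω : ℂ)
    (q g0 : ℝ → ℂ)
    (hg : ContDiffOn ℝ 2 g0 (Set.Ioo a b))
    (hg0 : ∀ x ∈ Set.Ioo a b, g0 x ≠ 0)
    (heq : ∀ x ∈ Set.Ioo a b, deriv (deriv g0) x = q x * g0 x) :
    ∀ x ∈ Set.Ioo a b,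
      -(deriv (deriv (fun y => g0 y * ∑' k : ℕ,
          ω ^ (2 * k + 1) / ((2 * k + 1)! : ℂ) *
            spps (fun t => (g0 t ^ 2)⁻¹) (fun t => g0 t ^ 2) (2 * k + 1) y)) x) +
        q x * (g0 x * ∑' k : ℕ,
          ω ^ (2 * k + 1) / ((2 * k + 1)! : ℂ) *
            spps (fun t => (g0 t ^ 2)⁻¹) (fun t => g0 t ^ 2) (2 * k + 1) x) +
        ω ^ 2 * (g0 x * ∑' k : ℕ,
          ω ^ (2 * k + 1) / ((2 * k + 1)! : ℂ) *
            spps (fun t => (g0 t ^ 2)⁻¹) (fun t => g0 t ^ 2) (2 * k + 1) x) = 0 := by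
  intro x hx
  obtain ⟨c, d, h0, hxcd, hcd⟩ := exists_Icc_subset_Ioo_of_mem ⟨ha, hb⟩ hx
  have hsq : ContinuousOn (fun t => g0 t ^ 2) (Icc c d) := (hg.continuousOn.pow 2).mono hcd
  have hsq_inv : ContinuousOn (fun t => (g0 t ^ 2)⁻¹) (Icc c d) :=
    hsq.inv₀ fun t ht => pow_ne_zero 2 (hg0 t (hcd ht))
  have hg' : HasDerivAt (deriv g0) (q x * g0 x) x := heq x hx ▸
    (((hg.deriv_of_isOpen (m := 1) isOpen_Ioo (by norm_num)).differentiableOn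
      one_ne_zero).differentiableAt (isOpen_Ioo.mem_nhds hx)).hasDerivAt
  refine neg_deriv_deriv_mul_add_eq_zero ?_ hg'
    (hasDerivAt_tsum_sppsTerm_even h0 hsq_inv hsq ω hxcd)
  filter_upwards [isOpen_Ioo.mem_nhds hxcd] with y hy
  have hy' := hcd (Ioo_subset_Icc_self hy)
  exact ⟨((hg.differentiableOn (by norm_num)).differentiableAt
      (isOpen_Ioo.mem_nhds hy')).hasDerivAt, hg0 y hy',
    hasDerivAt_tsum_sppsTerm_odd h0 hsq_inv hsq ω hy⟩

/-- The SPPS series `u₂ = g₀ ∑_{odd n} ωⁿ/n! X⁽ⁿ⁾` solves `-u₂'' + q u₂ + ω² u₂ = 0`,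
where `X⁽ⁿ⁾` has weight `g₀⁻²` for odd `n` and `g₀²` for even `n`. -/
theorem spps_u2_solution (a b : ℝ) (ha : a < 0) (hb : 0 < b) (ω : ℂ)
    (q g0 : ℝ → ℂ)
    (hq : ContinuousOn q (Set.Ioo a b))
    (hg : ContDiffOn ℝ 2 g0 (Set.Ioo a b))
    (hg0 : ∀ x ∈ Set.Ioo a b, g0 x ≠ 0)
    (heq : ∀ x ∈ Set.Ioo a b, deriv (deriv g0) x = q x * g0 x)
    (hbd : ∃ M : ℝ, ∀ x ∈ Set.Ioo a b, ‖g0 x‖ ≤ M ∧ ‖(g0 x)⁻¹‖ ≤ M) :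
    ∀ x ∈ Set.Ioo a b,
      -(deriv (deriv (fun y => g0 y * ∑' k : ℕ,
          ω ^ (2 * k + 1) / ((2 * k + 1)! : ℂ) *
            spps (fun t => (g0 t ^ 2)⁻¹) (fun t => g0 t ^ 2) (2 * k + 1) y)) x) +
        q x * (g0 x * ∑' k : ℕ,
          ω ^ (2 * k + 1) / ((2 * k + 1)! : ℂ) *
            spps (fun t => (g0 t ^ 2)⁻¹) (fun t => g0 t ^ 2) (2 * k + 1) x) +
        ω ^ 2 * (g0 x * ∑' k : ℕ,
          ω ^ (2 * k + 1) / ((2 * k + 1)! : ℂ) *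
            spps (fun t => (g0 t ^ 2)⁻¹) (fun t => g0 t ^ 2) (2 * k + 1) x) = 0 :=
  spps_u2_solution_general a b ha hb ω q g0 hg hg0 heq
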